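/- Let n ≥ 1. The map φ : Matrix (Fin n) (Fin n) ℂ → (Herm(n)/ℝ·I) × ℂ, φ(X) = (X X* + ℝ·I, det X), is surjective, and its fibres coincide exactly with the orbits of the right action of SU(n) given by X ↦ X C⁻¹: that is, φ(X) = φ(Y) if and only if Y = X C for some C ∈ SU(n). -/

import Mathlib

/-!
The fibre statement reduces to two facts. First, `X X* = Y Y* + s I` with `|det X| = |det Y|`
forces `s = 0`, since `det (M + s I) = ∏ (μᵢ + s)` is strictly increasing in `s` for `M ≥ 0`.
Second, `X X* = Y Y*` means `‖X* v‖ = ‖Y* v‖` for all `v`, so `X* v ↦ Y* v` is an isometry of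
the range of `X*`; extending it to a unitary `U` gives `Y = X U`. When `det X ≠ 0` this `U`
automatically has determinant one; otherwise `U` can be corrected by a unitary `D` with `X D = X`
and `det D = (det U)⁻¹`, acting by a phase on a kernel vector of `X`.

For surjectivity, given `(A + ℝ·I, z)` choose `t` (intermediate value theorem) with
`A + t I ≥ 0` and `det (A + t I) = |z|²`, write `A + t I = X X*`, and fix the phase of `det X`
by a diagonal unitary.
-/

open Matrix
open scoped ComplexOrder

/-- The real vector space of complex Hermitian (self-adjoint) `n × n` matrices,
as a real submodule of the matrix space. -/
noncomputable abbrev HermSub (n : ℕ) : Submodule ℝ (Matrix (Fin n) (Fin n) ℂ) :=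
  selfAdjoint.submodule ℝ (Matrix (Fin n) (Fin n) ℂ)

lemma one_mem_hermSub (n : ℕ) : (1 : Matrix (Fin n) (Fin n) ℂ) ∈ HermSub n :=
  IsSelfAdjoint.one _

lemma mulH_mem_hermSub {n m : ℕ} (X : Matrix (Fin n) (Fin m) ℂ) : X * Xᴴ ∈ HermSub n :=
  Matrix.isHermitian_mul_conjTranspose_self X

lemma conj_mem_hermSub {n : ℕ} (C : Matrix (Fin n) (Fin n) ℂ) (A : HermSub n) :
    C * (A : Matrix (Fin n) (Fin n) ℂ) * Cᴴ ∈ HermSub n :=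
  Matrix.isHermitian_mul_mul_conjTranspose C (A.2 : (A : Matrix (Fin n) (Fin n) ℂ).IsHermitian)

/-- The real line `ℝ·I` inside the space of Hermitian matrices. -/
noncomputable def lineI (n : ℕ) : Submodule ℝ (HermSub n) :=
  Submodule.span ℝ {(⟨1, one_mem_hermSub n⟩ : HermSub n)}

/-- The map `φ : X ↦ (X X* + ℝ·I, det X)`. -/
noncomputable def phi (n : ℕ) (X : Matrix (Fin n) (Fin n) ℂ) :
    (HermSub n ⧸ lineI n) × ℂ :=
  (Submodule.Quotient.mk ⟨X * Xᴴ, mulH_mem_hermSub X⟩, X.det)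

open scoped InnerProductSpace

theorem exists_prod_add_eq {ι : Type*} [Fintype ι] [Nonempty ι] (μ : ι → ℝ) {c : ℝ} (hc : 0 ≤ c) :
    ∃ t, (∀ i, 0 ≤ μ i + t) ∧ ∏ i, (μ i + t) = c := by
  obtain ⟨i₀, -, hmin⟩ := Finset.exists_min_image Finset.univ μ Finset.univ_nonempty
  have hge (t : ℝ) (i : ι) : μ i₀ + t ≤ μ i + t := by
    linarith [hmin i (Finset.mem_univ i)]
  have hcont : ContinuousOn (fun t => ∏ i, (μ i + t)) (Set.Icc (-μ i₀) (max 1 c - μ i₀)) :=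
    (continuous_finsetProd _ fun i _ => continuous_const.add continuous_id).continuousOn
  have hlow : ∏ i, (μ i + -μ i₀) = 0 := Finset.prod_eq_zero (Finset.mem_univ i₀) (add_neg_cancel _)
  have hhigh : c ≤ ∏ i, (μ i + (max 1 c - μ i₀)) :=
    calc c ≤ max 1 c ^ Fintype.card ι := (le_max_right 1 c).trans
          (le_self_pow₀ (le_max_left 1 c) Fintype.card_ne_zero)
      _ = ∏ _i : ι, max 1 c := (Finset.prod_const _).symm
      _ ≤ ∏ i, (μ i + (max 1 c - μ i₀)) := Finset.prod_le_prod
          (fun _ _ => zero_le_one.trans (le_max_left _ _))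
          fun i _ => by linarith [hge (max 1 c - μ i₀) i]
  obtain ⟨t, ht, hprod⟩ := intermediate_value_Icc (by linarith [le_max_left 1 c]) hcont
    ⟨hlow ▸ hc, hhigh⟩
  exact ⟨t, fun i => by linarith [hge t i, ht.1], hprod⟩

theorem RCLike.exists_mem_unitary_mul_eq {𝕜 : Type*} [RCLike 𝕜] {a b : 𝕜} (h : ‖a‖ = ‖b‖) :
    ∃ w ∈ unitary 𝕜, b = a * w := by
  rcases eq_or_ne a 0 with rfl | ha
  · exact ⟨1, one_mem _, by simpa using h.symm⟩
  · refine ⟨b / a, ?_, by field_simp⟩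
    rw [Unitary.mem_iff_self_mul_star, RCLike.star_def, RCLike.mul_conj, norm_div, ← h,
      div_self (norm_ne_zero_iff.2 ha), RCLike.ofReal_one, one_pow]

theorem LinearMap.exists_linearIsometry_comp_eq_of_norm_eq {𝕜 E V : Type*} [RCLike 𝕜]
    [NormedAddCommGroup E] [InnerProductSpace 𝕜 E] [NormedAddCommGroup V] [InnerProductSpace 𝕜 V]
    [FiniteDimensional 𝕜 V] {f g : E →ₗ[𝕜] V} (h : ∀ x, ‖f x‖ = ‖g x‖) :
    ∃ W : V →ₗᵢ[𝕜] V, ∀ x, W (f x) = g x := by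
  have hker : LinearMap.ker f ≤ LinearMap.ker g := fun x hx => by
    rw [LinearMap.mem_ker, ← norm_eq_zero, ← h, norm_eq_zero, ← LinearMap.mem_ker]; exact hx
  let L : LinearMap.range f →ₗ[𝕜] V :=
    (LinearMap.ker f).liftQ g hker ∘ₗ f.quotKerEquivRange.symm.toLinearMap
  have hL (x : E) : L ⟨f x, LinearMap.mem_range_self f x⟩ = g x := by
    simp [L, LinearMap.quotKerEquivRange_symm_apply_image]
  let L' : LinearMap.range f →ₗᵢ[𝕜] V := ⟨L, by
    rintro ⟨_, x, rfl⟩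
    rw [hL, ← h]; rfl⟩
  exact ⟨L'.extend, fun x => (L'.extend_apply ⟨f x, _⟩).trans (hL x)⟩

namespace Matrix

variable {𝕜 ι : Type*} [RCLike 𝕜] [Fintype ι] [DecidableEq ι]

theorem IsHermitian.add_smul_one_eq {A : Matrix ι ι 𝕜} (hA : A.IsHermitian) (t : ℝ) :
    A + t • (1 : Matrix ι ι 𝕜) = (hA.eigenvectorUnitary : Matrix ι ι 𝕜) *
      diagonal (fun i => ((hA.eigenvalues i + t : ℝ) : 𝕜)) *
        star (hA.eigenvectorUnitary : Matrix ι ι 𝕜) := by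
  have hdiag : diagonal (fun i => ((hA.eigenvalues i + t : ℝ) : 𝕜))
      = diagonal (RCLike.ofReal ∘ hA.eigenvalues) + t • 1 := by
    ext i j
    rcases eq_or_ne i j with rfl | h <;> simp [*, RCLike.real_smul_eq_coe_mul]
  conv_lhs => rw [hA.spectral_theorem, Unitary.conjStarAlgAut_apply]
  rw [hdiag, mul_add, add_mul, mul_smul_one, smul_mul,
    Unitary.mul_star_self_of_mem hA.eigenvectorUnitary.2]

theorem IsHermitian.det_add_smul_one {A : Matrix ι ι 𝕜} (hA : A.IsHermitian) (t : ℝ) :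
    (A + t • (1 : Matrix ι ι 𝕜)).det = ∏ i, ((hA.eigenvalues i + t : ℝ) : 𝕜) := by
  have hU := Unitary.mul_star_self_of_mem (det_of_mem_unitary hA.eigenvectorUnitary.2)
  rw [hA.add_smul_one_eq, det_mul, det_mul, det_diagonal, star_eq_conjTranspose, det_conjTranspose,
    mul_right_comm, hU, one_mul]

theorem IsHermitian.posSemidef_add_smul_one {A : Matrix ι ι 𝕜} (hA : A.IsHermitian) {t : ℝ}
    (ht : ∀ i, 0 ≤ hA.eigenvalues i + t) : (A + t • (1 : Matrix ι ι 𝕜)).PosSemidef := by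
  rw [hA.add_smul_one_eq, star_eq_conjTranspose]
  exact PosSemidef.mul_mul_conjTranspose_same
    (posSemidef_diagonal_iff.2 fun i => RCLike.ofReal_nonneg.2 (ht i)) _

theorem PosSemidef.det_lt_det_add_smul_one [Nonempty ι] {M : Matrix ι ι 𝕜} (hM : M.PosSemidef)
    {s : ℝ} (hs : 0 < s) : M.det < (M + s • (1 : Matrix ι ι 𝕜)).det := by
  have hμ := hM.eigenvalues_nonneg
  rw [hM.isHermitian.det_add_smul_one, hM.isHermitian.det_eq_prod_eigenvalues,
    ← RCLike.ofReal_prod, ← RCLike.ofReal_prod, RCLike.ofReal_lt_ofReal]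
  by_cases hpos : ∀ i, 0 < hM.isHermitian.eigenvalues i
  · exact Finset.prod_lt_prod_of_nonempty (fun i _ => hpos i) (fun i _ => lt_add_of_pos_right _ hs)
      Finset.univ_nonempty
  · obtain ⟨j, hj⟩ := not_forall.1 hpos
    rw [Finset.prod_eq_zero (Finset.mem_univ j) (le_antisymm (not_lt.1 hj) (hμ j))]
    exact Finset.prod_pos fun i _ => add_pos_of_nonneg_of_pos (hμ i) hs

theorem PosSemidef.eq_of_sub_eq_smul_one_of_det_eq [Nonempty ι] {M N : Matrix ι ι 𝕜}
    (hM : M.PosSemidef) (hN : N.PosSemidef) {s : ℝ} (hs : M - N = s • 1) (hdet : M.det = N.det) :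
    M = N := by
  rcases lt_trichotomy s 0 with h | rfl | h
  · have hNM : N = M + (-s) • 1 := by rw [neg_smul, ← hs]; abel
    exact absurd (hdet ▸ hNM ▸ hM.det_lt_det_add_smul_one (neg_pos.2 h)) (lt_irrefl _)
  · rwa [zero_smul, sub_eq_zero] at hs
  · have hMN : M = N + s • 1 := by rw [← hs]; abel
    exact absurd (hdet ▸ hMN ▸ hN.det_lt_det_add_smul_one h) (lt_irrefl _)

theorem mul_mul_conjTranspose_of_mem_unitaryGroup (X : Matrix ι ι 𝕜) {U : Matrix ι ι 𝕜}
    (hU : U ∈ unitaryGroup ι 𝕜) : X * U * (X * U)ᴴ = X * Xᴴ := by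
  rw [conjTranspose_mul, Matrix.mul_assoc, ← Matrix.mul_assoc U, ← star_eq_conjTranspose,
    Unitary.mul_star_self_of_mem hU, Matrix.one_mul]

theorem exists_mem_unitaryGroup_det_eq [Nonempty ι] {w : 𝕜} (hw : w ∈ unitary 𝕜) :
    ∃ D ∈ unitaryGroup ι 𝕜, D.det = w := by
  let i₀ : ι := Classical.arbitrary ι
  refine ⟨diagonal (Pi.mulSingle i₀ w), ?_, by rw [det_diagonal, Fintype.prod_pi_mulSingle']⟩
  rw [mem_unitaryGroup_iff, star_eq_conjTranspose, diagonal_conjTranspose, diagonal_mul_diagonal,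
    ← diagonal_one]
  congr 1
  ext i
  rcases eq_or_ne i i₀ with rfl | h
  · simpa using Unitary.mul_star_self_of_mem hw
  · simp [h]

theorem PosSemidef.exists_mul_conjTranspose_eq {P : Matrix ι ι 𝕜} (hP : P.PosSemidef) :
    ∃ X : Matrix ι ι 𝕜, X * Xᴴ = P := by
  open scoped MatrixOrder in
  obtain ⟨B, rfl⟩ := CStarAlgebra.nonneg_iff_eq_star_mul_self.mp hP.nonneg
  exact ⟨Bᴴ, by rw [conjTranspose_conjTranspose, star_eq_conjTranspose]⟩

theorem IsHermitian.exists_mul_conjTranspose_eq_add_smul_one_and_det_eq [Nonempty ι]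
    {A : Matrix ι ι 𝕜} (hA : A.IsHermitian) (z : 𝕜) :
    ∃ (X : Matrix ι ι 𝕜) (t : ℝ), X * Xᴴ = A + t • 1 ∧ X.det = z := by
  obtain ⟨t, ht, hprod⟩ := exists_prod_add_eq hA.eigenvalues (sq_nonneg ‖z‖)
  obtain ⟨X₀, hX₀⟩ := (hA.posSemidef_add_smul_one ht).exists_mul_conjTranspose_eq
  have hnorm : ‖X₀.det‖ = ‖z‖ := by
    have h := congrArg det hX₀
    rw [det_mul, det_conjTranspose, RCLike.star_def, RCLike.mul_conj, hA.det_add_smul_one,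
      ← RCLike.ofReal_prod, hprod] at h
    exact (sq_eq_sq₀ (norm_nonneg _) (norm_nonneg _)).1 (by exact_mod_cast h)
  obtain ⟨w, hw, hz⟩ := RCLike.exists_mem_unitary_mul_eq hnorm
  obtain ⟨D, hD, hdet⟩ := exists_mem_unitaryGroup_det_eq (ι := ι) hw
  exact ⟨X₀ * D, t, by rw [mul_mul_conjTranspose_of_mem_unitaryGroup _ hD, hX₀],
    by rw [det_mul, hdet, hz]⟩

theorem exists_mem_unitaryGroup_of_mul_conjTranspose_eq {X Y : Matrix ι ι 𝕜}
    (h : X * Xᴴ = Y * Yᴴ) : ∃ U ∈ unitaryGroup ι 𝕜, Y = X * U := by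
  let T := toEuclideanCLM (n := ι) (𝕜 := 𝕜)
  have hnorm_sq (A : Matrix ι ι 𝕜) (v) : ‖T Aᴴ v‖ ^ 2 = RCLike.re ⟪T (A * Aᴴ) v, v⟫_𝕜 := by
    rw [ContinuousLinearMap.apply_norm_sq_eq_inner_adjoint_left,
      ← ContinuousLinearMap.star_eq_adjoint, ← map_star, star_eq_conjTranspose,
      conjTranspose_conjTranspose, map_mul]
    rfl
  obtain ⟨W, hW⟩ := LinearMap.exists_linearIsometry_comp_eq_of_norm_eq
    (f := (T Xᴴ : EuclideanSpace 𝕜 ι →ₗ[𝕜] EuclideanSpace 𝕜 ι)) (g := T Yᴴ) fun v => by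
      rw [← sq_eq_sq₀ (norm_nonneg _) (norm_nonneg _)]
      exact (hnorm_sq X v).trans (h ▸ (hnorm_sq Y v).symm)
  obtain ⟨U, hUW⟩ : ∃ U, T U = W.toContinuousLinearMap := T.surjective _
  have hUu : U ∈ unitaryGroup ι 𝕜 := by
    rw [mem_unitaryGroup_iff']
    apply EquivLike.injective T
    rw [map_mul, map_star, map_one, hUW]
    exact (ContinuousLinearMap.norm_map_iff_adjoint_comp_self _).1 W.norm_map
  have hYX : Yᴴ = U * Xᴴ := EquivLike.injective T <| ContinuousLinearMap.ext fun v => by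
    rw [map_mul, hUW]
    exact (hW v).symm
  refine ⟨star U, Unitary.star_mem hUu, ?_⟩
  rw [← conjTranspose_conjTranspose Y, hYX, conjTranspose_mul, conjTranspose_conjTranspose,
    star_eq_conjTranspose]

theorem exists_mem_unitaryGroup_mul_eq_self_det_eq {X : Matrix ι ι 𝕜} (hX : X.det = 0) {w : 𝕜}
    (hw : w ∈ unitary 𝕜) : ∃ D ∈ unitaryGroup ι 𝕜, X * D = X ∧ D.det = w := by
  obtain ⟨v, hv, hXv⟩ := exists_mulVec_eq_zero_iff.2 hX
  set c := star v ⬝ᵥ v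
  have hc : c ≠ 0 := dotProduct_star_self_eq_zero.not.2 hv
  have hcs : star c = c := (star_dotProduct v v).symm
  set P := vecMulVec v (star v)
  have hPP : P * P = c • P := by rw [vecMulVec_mul_vecMulVec, vecMulVec_smul]
  have hPH : Pᴴ = P := by rw [conjTranspose_vecMulVec, star_star]
  -- `1 + a • P` multiplies `v` by `w` and fixes the orthogonal complement of `v`.
  set a := (w - 1) / c
  have ha : a + star a + a * star a * c = 0 := by
    have hw' := Unitary.mul_star_self_of_mem hw
    simp only [a, star_div₀, star_sub, star_one, hcs]
    field_simp
    linear_combination hw'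
  refine ⟨1 + a • P, ?_, ?_, ?_⟩
  · rw [mem_unitaryGroup_iff, star_eq_conjTranspose, conjTranspose_add, conjTranspose_one,
      conjTranspose_smul, hPH]
    calc (1 + a • P) * (1 + star a • P) = 1 + (a + star a) • P + (a * star a) • (P * P) := by
          simp only [add_mul, mul_add, Matrix.one_mul, Matrix.mul_one, smul_mul_smul_comm]; module
      _ = 1 := by rw [hPP, smul_smul, add_assoc, ← add_smul, ha, zero_smul, add_zero]
  · rw [Matrix.mul_add, Matrix.mul_one, Matrix.mul_smul, mul_vecMulVec, hXv, zero_vecMulVec,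
      smul_zero, add_zero]
  · rw [← smul_vecMulVec, vecMulVec_eq Unit, det_one_add_replicateCol_mul_replicateRow,
      dotProduct_smul]
    simp [a, c, hc]

theorem mul_conjTranspose_eq_and_det_eq_iff {X Y : Matrix ι ι 𝕜} :
    X * Xᴴ = Y * Yᴴ ∧ X.det = Y.det ↔ ∃ C ∈ specialUnitaryGroup ι 𝕜, Y = X * C := by
  constructor
  · rintro ⟨h, hdet⟩
    obtain ⟨U, hU, rfl⟩ := exists_mem_unitaryGroup_of_mul_conjTranspose_eq h
    have hdetU := det_of_mem_unitary hU
    rw [det_mul] at hdet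
    by_cases hX : X.det = 0
    · obtain ⟨D, hD, hXD, hdetD⟩ :=
        exists_mem_unitaryGroup_mul_eq_self_det_eq hX (Unitary.star_mem hdetU)
      refine ⟨D * U, mem_specialUnitaryGroup_iff.2 ⟨mul_mem hD hU, ?_⟩,
        by rw [← Matrix.mul_assoc, hXD]⟩
      rw [det_mul, hdetD, Unitary.star_mul_self_of_mem hdetU]
    · exact ⟨U, mem_specialUnitaryGroup_iff.2 ⟨hU, (mul_eq_left₀ hX).1 hdet.symm⟩, rfl⟩
  · rintro ⟨C, hC, rfl⟩
    obtain ⟨hCu, hdetC⟩ := mem_specialUnitaryGroup_iff.1 hC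
    exact ⟨(mul_mul_conjTranspose_of_mem_unitaryGroup X hCu).symm, by rw [det_mul, hdetC, mul_one]⟩

end Matrix

theorem mk_eq_mk_iff_exists_sub_eq_smul_one {n : ℕ} {A B : HermSub n} :
    (Submodule.Quotient.mk A : HermSub n ⧸ lineI n) = Submodule.Quotient.mk B ↔
      ∃ s : ℝ, (A : Matrix (Fin n) (Fin n) ℂ) - B = s • 1 := by
  rw [Submodule.Quotient.eq, lineI, Submodule.mem_span_singleton]
  refine exists_congr fun s => ?_
  rw [eq_comm, ← Subtype.coe_inj]
  rfl

theorem phi_surjective {n : ℕ} (hn : 1 ≤ n) : Function.Surjective (phi n) := by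
  have : Nonempty (Fin n) := ⟨⟨0, hn⟩⟩
  rintro ⟨q, z⟩
  obtain ⟨A, rfl⟩ := Submodule.Quotient.mk_surjective _ q
  obtain ⟨X, t, hX, hdet⟩ :=
    IsHermitian.exists_mul_conjTranspose_eq_add_smul_one_and_det_eq (A.2 : IsSelfAdjoint A.1) z
  exact ⟨X, Prod.ext (mk_eq_mk_iff_exists_sub_eq_smul_one.2 ⟨t, (sub_eq_of_eq_add' hX :)⟩) hdet⟩

theorem phi_eq_phi_iff {n : ℕ} (hn : 1 ≤ n) {X Y : Matrix (Fin n) (Fin n) ℂ} :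
    phi n X = phi n Y ↔ X * Xᴴ = Y * Yᴴ ∧ X.det = Y.det := by
  have : Nonempty (Fin n) := ⟨⟨0, hn⟩⟩
  simp only [phi, Prod.mk.injEq, mk_eq_mk_iff_exists_sub_eq_smul_one]
  constructor
  · rintro ⟨⟨s, hs⟩, hdet⟩
    refine ⟨(posSemidef_self_mul_conjTranspose X).eq_of_sub_eq_smul_one_of_det_eq
      (posSemidef_self_mul_conjTranspose Y) hs ?_, hdet⟩
    rw [det_mul, det_mul, det_conjTranspose, det_conjTranspose, hdet]
  · rintro ⟨h, hdet⟩
    exact ⟨⟨0, by rw [h, sub_self, zero_smul]⟩, hdet⟩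

/-- `φ(X) = (X X* + ℝ·I, det X)` is surjective, and its fibres coincide with the orbits
of the right action `X ↦ X C⁻¹` of `SU(n)`. -/
theorem stmt9 (n : ℕ) (hn : 1 ≤ n) :
    Function.Surjective (phi n) ∧
    ∀ X Y : Matrix (Fin n) (Fin n) ℂ,
      phi n X = phi n Y ↔
        ∃ C : Matrix (Fin n) (Fin n) ℂ, C * Cᴴ = 1 ∧ C.det = 1 ∧ Y = X * C := by
  refine ⟨phi_surjective hn, fun X Y => ?_⟩
  rw [phi_eq_phi_iff hn, mul_conjTranspose_eq_and_det_eq_iff]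
  simp only [mem_specialUnitaryGroup_iff, mem_unitaryGroup_iff, star_eq_conjTranspose, and_assoc]
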